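/- Let H₀ be a Hermitian d×d complex matrix with largest eigenvalue E_max and smallest eigenvalue E_min, with E_max > E_min. Let ψ₀ and ψ_T be unit vectors in ℂ^d, set ρ₀ = |ψ₀⟩⟨ψ₀| and ρ_T = |ψ_T⟩⟨ψ_T|, let D_B(ψ_T, ψ₀) = √(2·(1 − |⟨ψ_T, ψ₀⟩|)) be the Bures distance, and let Var_{ψ_T}(H₀) = ⟨ψ_T, H₀²ψ_T⟩ − ⟨ψ_T, H₀ψ_T⟩². If Var_{ψ_T}(H₀) > 0, then ‖ρ_T − ρ₀‖₁ / (E_max − E_min) ≤ D_B(ψ_T, ψ₀) / √(Var_{ψ_T}(H₀)), where ‖A‖₁ = Tr√(AᴴA) is the trace norm. -/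

import Mathlib

open Matrix
open scoped ComplexOrder

/-- Trace norm (Schatten 1-norm): `‖A‖₁ = Tr √(Aᴴ A)`. -/
noncomputable def PosSemidef.sqrt' {d : ℕ} {B : Matrix (Fin d) (Fin d) ℂ} (hB : B.PosSemidef) :
    Matrix (Fin d) (Fin d) ℂ :=
  (hB.1.eigenvectorUnitary : Matrix (Fin d) (Fin d) ℂ) *
    diagonal (((↑) : ℝ → ℂ) ∘ Real.sqrt ∘ hB.1.eigenvalues) *
    star (hB.1.eigenvectorUnitary : Matrix (Fin d) (Fin d) ℂ)

noncomputable def traceNorm {d : ℕ} (A : Matrix (Fin d) (Fin d) ℂ) : ℝ :=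
  ((PosSemidef.sqrt' (Matrix.posSemidef_conjTranspose_mul_self A)).trace).re

/-- The rank-one projection `|u⟩⟨v|` as a d×d matrix. -/
def outer {d : ℕ} (u v : Fin d → ℂ) : Matrix (Fin d) (Fin d) ℂ :=
  Matrix.vecMulVec u (star v)

/-- The Bures distance between pure states: `D_B(ψ, φ) = √(2(1 − |⟨ψ, φ⟩|))`,
with `⟨ψ, φ⟩ = star ψ ⬝ᵥ φ` the standard Hermitian inner product on ℂ^d. -/
noncomputable def buresDist {d : ℕ} (ψ φ : Fin d → ℂ) : ℝ :=
  Real.sqrt (2 * (1 - ‖star ψ ⬝ᵥ φ‖))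

/-- The variance of a Hermitian matrix `H` in the state `ψ`:
`Var_ψ(H) = ⟨ψ, H²ψ⟩ − ⟨ψ, Hψ⟩²` (expectation values of Hermitian matrices are real,
so their real parts are taken). -/
noncomputable def matVariance {d : ℕ} (H : Matrix (Fin d) (Fin d) ℂ)
    (ψ : Fin d → ℂ) : ℝ :=
  (star ψ ⬝ᵥ (H * H).mulVec ψ).re - ((star ψ ⬝ᵥ H.mulVec ψ).re) ^ 2

/-!
The trace distance of two pure states is controlled by their overlap: `‖A‖₁² ≤ rank A · Tr(AᴴA)`
by Cauchy–Schwarz on the singular values, `ρ_T − ρ₀` has rank at most two and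
`Tr((ρ_T − ρ₀)²) = 2 − 2|⟨ψ_T, ψ₀⟩|²`, so `‖ρ_T − ρ₀‖₁ ≤ 2 D_B(ψ_T, ψ₀)`. On the other side, the
squared moduli of the coordinates of `ψ_T` in an eigenbasis of `H₀` form a probability
distribution on the eigenvalues whose variance is `Var_{ψ_T}(H₀)`, and Popoviciu's inequality
gives `√Var_{ψ_T}(H₀) ≤ (E_max − E_min) / 2`.
-/

open ProbabilityTheory MeasureTheory NNReal

lemma sum_mul_sq_sub_sq_sum_mul_le {ι : Type*} [Fintype ι] (w : ι → ℝ≥0) (hw : ∑ i, w i = 1)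
    {x : ι → ℝ} {a b : ℝ} (hx : ∀ i, x i ∈ Set.Icc a b) :
    ∑ i, w i * x i ^ 2 - (∑ i, w i * x i) ^ 2 ≤ ((b - a) / 2) ^ 2 := by
  let _ : MeasurableSpace ι := ⊤
  let P := PMF.ofFintype (fun i ↦ (w i : ENNReal)) (by exact_mod_cast hw)
  have hE (f : ι → ℝ) : ∫ i, f i ∂P.toMeasure = ∑ i, w i * f i := by
    simp [PMF.integral_eq_sum, P]
  have h := variance_le_sq_of_bounded (μ := P.toMeasure) (ae_of_all _ hx) (by fun_prop)
  rwa [variance_eq_sub (memLp_of_bounded (ae_of_all _ hx) (by fun_prop) 2), hE, hE] at h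

lemma Matrix.rank_sub_le {m n K : Type*} [Fintype n] [Field K] (A B : Matrix m n K) :
    (A - B).rank ≤ A.rank + B.rank := by
  have hsub : (A - B).mulVecLin = A.mulVecLin + -B.mulVecLin :=
    LinearMap.ext fun v ↦ by simp [sub_eq_add_neg]
  rw [Matrix.rank, Matrix.rank, Matrix.rank, hsub, ← LinearMap.range_neg B.mulVecLin]
  exact (Submodule.finrank_mono (LinearMap.range_add_le _ _)).trans
    (Submodule.finrank_add_le_finrank_add_finrank _ _)

lemma Matrix.IsHermitian.star_dotProduct_cfc_mulVec {n 𝕜 : Type*} [Fintype n] [DecidableEq n]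
    [RCLike 𝕜] {H : Matrix n n 𝕜} (hH : H.IsHermitian) (f : ℝ → ℝ) (ψ : n → 𝕜) :
    star ψ ⬝ᵥ (cfc f H *ᵥ ψ) = ((∑ i, ‖(star (hH.eigenvectorUnitary : Matrix n n 𝕜) *ᵥ ψ) i‖ ^ 2
      * f (hH.eigenvalues i) : ℝ) : 𝕜) := by
  have hc : star (star (hH.eigenvectorUnitary : Matrix n n 𝕜) *ᵥ ψ)
      = star ψ ᵥ* (hH.eigenvectorUnitary : Matrix n n 𝕜) := by
    rw [star_mulVec, star_eq_conjTranspose, conjTranspose_conjTranspose]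
  rw [hH.cfc_eq, IsHermitian.cfc, Unitary.conjStarAlgAut_apply, ← mulVec_mulVec, ← mulVec_mulVec,
    dotProduct_mulVec, ← hc]
  simp only [dotProduct, mulVec_diagonal, Pi.star_apply, Function.comp_apply, RCLike.star_def]
  push_cast
  refine Finset.sum_congr rfl fun i _ ↦ ?_
  rw [← RCLike.conj_mul]
  ring

lemma matVariance_le {d : ℕ} {H : Matrix (Fin d) (Fin d) ℂ} (hH : H.IsHermitian)
    {ψ : Fin d → ℂ} (hψ : star ψ ⬝ᵥ ψ = 1) :
    matVariance H ψ ≤ (((⨆ i, hH.eigenvalues i) - (⨅ i, hH.eigenvalues i)) / 2) ^ 2 := by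
  let w i : ℝ≥0 := ‖(star (hH.eigenvectorUnitary : Matrix (Fin d) (Fin d) ℂ) *ᵥ ψ) i‖₊ ^ 2
  have hmoment (f : ℝ → ℝ) :
      (star ψ ⬝ᵥ (cfc f H *ᵥ ψ)).re = ∑ i, w i * f (hH.eigenvalues i) := by
    rw [hH.star_dotProduct_cfc_mulVec]
    simp only [w, NNReal.coe_pow, coe_nnnorm]
    exact RCLike.ofReal_re (K := ℂ) _
  have hw : ∑ i, w i = 1 := by
    have h := hmoment fun _ ↦ 1
    rw [cfc_const_one ℝ H hH.isSelfAdjoint, one_mulVec, hψ] at h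
    have h' : ∑ i, (w i : ℝ) = 1 := by simpa using h.symm
    exact_mod_cast h'
  have hmean : (star ψ ⬝ᵥ (H *ᵥ ψ)).re = ∑ i, w i * hH.eigenvalues i := by
    simpa only [cfc_id ℝ H hH.isSelfAdjoint, id_eq] using hmoment id
  have hsq : (star ψ ⬝ᵥ ((H * H) *ᵥ ψ)).re = ∑ i, w i * hH.eigenvalues i ^ 2 := by
    have h := hmoment (· ^ 2)
    rwa [cfc_pow_id H 2 hH.isSelfAdjoint, pow_two H] at h
  rw [matVariance, hmean, hsq]
  exact sum_mul_sq_sub_sq_sum_mul_le w hw fun i ↦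
    ⟨ciInf_le (Finite.bddBelow_range _) i, le_ciSup (Finite.bddAbove_range _) i⟩

section TraceNorm

variable {d : ℕ}

lemma traceNorm_eq_sum_sqrt_eigenvalues (A : Matrix (Fin d) (Fin d) ℂ) :
    traceNorm A = ∑ i, √((posSemidef_conjTranspose_mul_self A).1.eigenvalues i) := by
  rw [traceNorm, PosSemidef.sqrt', trace_mul_cycle, Unitary.coe_star_mul_self, one_mul,
    trace_diagonal]
  simp

lemma traceNorm_sq_le_rank_mul_re_trace (A : Matrix (Fin d) (Fin d) ℂ) :
    traceNorm A ^ 2 ≤ A.rank * (Aᴴ * A).trace.re := by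
  set hB := posSemidef_conjTranspose_mul_self A
  set μ := hB.1.eigenvalues
  set S := Finset.univ.filter fun i ↦ μ i ≠ 0
  have hS : S.card = A.rank := by
    rw [← rank_conjTranspose_mul_self A, hB.1.rank_eq_card_non_zero_eigs, Fintype.card_subtype]
  have htrace : (Aᴴ * A).trace.re = ∑ i ∈ S, μ i := by
    rw [Finset.sum_filter_ne_zero, hB.1.trace_eq_sum_eigenvalues]
    simp [μ]
  have hsqrt : ∑ i, √(μ i) = ∑ i ∈ S, √(μ i) :=
    (Finset.sum_filter_of_ne (p := fun i ↦ μ i ≠ 0) fun i _ h hμ ↦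
      h (by rw [hμ, Real.sqrt_zero])).symm
  rw [traceNorm_eq_sum_sqrt_eigenvalues, hsqrt, htrace, ← hS]
  calc (∑ i ∈ S, √(μ i)) ^ 2 ≤ S.card * ∑ i ∈ S, √(μ i) ^ 2 := sq_sum_le_card_mul_sum_sq
    _ = S.card * ∑ i ∈ S, μ i := by
      rw [Finset.sum_congr rfl fun i _ ↦ Real.sq_sqrt (hB.eigenvalues_nonneg i)]

end TraceNorm

section PureStates

variable {d : ℕ}

lemma trace_outer_mul_outer (u v w x : Fin d → ℂ) :
    (outer u v * outer w x).trace = (star v ⬝ᵥ w) * (star x ⬝ᵥ u) := by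
  rw [outer, outer, vecMulVec_mul_vecMulVec, trace_vecMulVec, dotProduct_smul, smul_eq_mul,
    dotProduct_comm u]

lemma rank_outer_sub_outer_le (u v : Fin d → ℂ) : (outer u u - outer v v).rank ≤ 2 :=
  (rank_sub_le _ _).trans (add_le_add (rank_vecMulVec_le _ _) (rank_vecMulVec_le _ _))

lemma re_trace_sq_outer_sub_outer {u v : Fin d → ℂ} (hu : star u ⬝ᵥ u = 1)
    (hv : star v ⬝ᵥ v = 1) :
    ((outer u u - outer v v)ᴴ * (outer u u - outer v v)).trace.re
      = 2 - 2 * ‖star u ⬝ᵥ v‖ ^ 2 := by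
  have hself (x : Fin d → ℂ) : (outer x x)ᴴ = outer x x := by
    rw [outer, conjTranspose_vecMulVec, star_star]
  have hconj : star v ⬝ᵥ u = star (star u ⬝ᵥ v) := star_dotProduct _ _
  rw [conjTranspose_sub, hself, hself, sub_mul, mul_sub, mul_sub, trace_sub, trace_sub, trace_sub,
    trace_outer_mul_outer, trace_outer_mul_outer, trace_outer_mul_outer, trace_outer_mul_outer,
    hu, hv, hconj, RCLike.star_def, RCLike.mul_conj, RCLike.conj_mul]
  simp [← Complex.ofReal_pow]
  ring

lemma traceNorm_outer_sub_outer_le {u v : Fin d → ℂ} (hu : star u ⬝ᵥ u = 1)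
    (hv : star v ⬝ᵥ v = 1) : traceNorm (outer u u - outer v v) ≤ 2 * buresDist u v := by
  set A := outer u u - outer v v
  set a := ‖star u ⬝ᵥ v‖
  have htrace : (Aᴴ * A).trace.re = 2 - 2 * a ^ 2 := re_trace_sq_outer_sub_outer hu hv
  have htrace_nonneg : 0 ≤ (Aᴴ * A).trace.re :=
    (Complex.nonneg_iff.mp (posSemidef_conjTranspose_mul_self A).trace_nonneg).1
  have hrank : (A.rank : ℝ) ≤ 2 := by exact_mod_cast rank_outer_sub_outer_le u v
  have ha : a ≤ 1 := by nlinarith [norm_nonneg (star u ⬝ᵥ v)]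
  have hsq : traceNorm A ^ 2 ≤ (2 * buresDist u v) ^ 2 := by
    rw [mul_pow, buresDist, Real.sq_sqrt (by linarith)]
    -- `1 - a² ≤ 2 (1 - a)` because `(1 - a)² ≥ 0`
    nlinarith [traceNorm_sq_le_rank_mul_re_trace A, mul_le_mul_of_nonneg_right hrank htrace_nonneg,
      sq_nonneg (1 - a)]
  exact le_of_pow_le_pow_left₀ two_ne_zero (mul_nonneg zero_le_two (Real.sqrt_nonneg _)) hsq

end PureStates

theorem bound_comparison_closed_system_general (d : ℕ)
    (H₀ : Matrix (Fin d) (Fin d) ℂ) (hH₀ : H₀.IsHermitian)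
    (hgap : (⨅ i, hH₀.eigenvalues i) < (⨆ i, hH₀.eigenvalues i))
    (ψ₀ ψT : Fin d → ℂ) (hψ₀ : star ψ₀ ⬝ᵥ ψ₀ = 1) (hψT : star ψT ⬝ᵥ ψT = 1)
    (hvar : 0 < matVariance H₀ ψT) :
    traceNorm (outer ψT ψT - outer ψ₀ ψ₀)
        / ((⨆ i, hH₀.eigenvalues i) - (⨅ i, hH₀.eigenvalues i))
      ≤ buresDist ψT ψ₀ / Real.sqrt (matVariance H₀ ψT) := by
  set spread := (⨆ i, hH₀.eigenvalues i) - (⨅ i, hH₀.eigenvalues i)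
  have hspread : 0 < spread := sub_pos.mpr hgap
  have hstd : √(matVariance H₀ ψT) ≤ spread / 2 :=
    (Real.sqrt_le_sqrt (matVariance_le hH₀ hψT)).trans_eq (Real.sqrt_sq (by positivity))
  calc traceNorm (outer ψT ψT - outer ψ₀ ψ₀) / spread
      ≤ 2 * buresDist ψT ψ₀ / spread := by
        gcongr; exact traceNorm_outer_sub_outer_le hψT hψ₀
    _ = buresDist ψT ψ₀ / (spread / 2) := by field_simp
    _ ≤ buresDist ψT ψ₀ / √(matVariance H₀ ψT) :=
        div_le_div_of_nonneg_left (Real.sqrt_nonneg _) (Real.sqrt_pos.mpr hvar) hstd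

/-- Eq. (33) of Appendix C: for a Hermitian matrix `H₀` with largest
eigenvalue `E_max` and smallest eigenvalue `E_min`, `E_max > E_min`, and unit vectors
`ψ₀, ψ_T ∈ ℂ^d` with `Var_{ψ_T}(H₀) > 0`,
`‖ρ_T − ρ₀‖₁ / (E_max − E_min) ≤ D_B(ψ_T, ψ₀) / √(Var_{ψ_T}(H₀))`,
where `ρ₀ = |ψ₀⟩⟨ψ₀|` and `ρ_T = |ψ_T⟩⟨ψ_T|`. -/
theorem bound_comparison_closed_system (d : ℕ) (hd : 1 ≤ d)
    (H₀ : Matrix (Fin d) (Fin d) ℂ) (hH₀ : H₀.IsHermitian)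
    (hgap : (⨅ i, hH₀.eigenvalues i) < (⨆ i, hH₀.eigenvalues i))
    (ψ₀ ψT : Fin d → ℂ) (hψ₀ : star ψ₀ ⬝ᵥ ψ₀ = 1) (hψT : star ψT ⬝ᵥ ψT = 1)
    (hvar : 0 < matVariance H₀ ψT) :
    traceNorm (outer ψT ψT - outer ψ₀ ψ₀)
        / ((⨆ i, hH₀.eigenvalues i) - (⨅ i, hH₀.eigenvalues i))
      ≤ buresDist ψT ψ₀ / Real.sqrt (matVariance H₀ ψT) :=
  bound_comparison_closed_system_general d H₀ hH₀ hgap ψ₀ ψT hψ₀ hψT hvar
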